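/- Under the hypotheses of the main theorem (stacked closed-loop dynamics, skew-symmetry of H′(t) − 2C(t), G′(t) = W(t)ᵀW(t) − λG(t) + λγ·I, eigenvalues of H(t) and G(t) in [m₁, m₂] with 0 < m₁ ≤ m₂, K symmetric positive definite with smallest eigenvalue k, and ‖(d(t), W(t)ᵀd₁(t) + λγ·a)‖ ≤ D̄ for all t), the Lyapunov-like function V(t) = s(t)ᵀH(t)s(t) + ã(t)ᵀG(t)ã(t) satisfies the differential inequality V′(t) ≤ −2λ_con·V(t) + (2D̄/√(m₁))·√(V(t)) for all t ≥ 0, where λ_con = min(k, (λ/2)·(m₁ + γ))/m₂. -/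

import Mathlib

open scoped Matrix

attribute [local instance] Matrix.normedAddCommGroup Matrix.normedSpace

/-- Matrix-vector multiplication viewed as a map between Euclidean spaces. -/
noncomputable def mv {n m : ℕ} (A : Matrix (Fin n) (Fin m) ℝ)
    (x : EuclideanSpace ℝ (Fin m)) : EuclideanSpace ℝ (Fin n) :=
  WithLp.toLp 2 (A.mulVec x)

section Helpers

lemma symm_isHermitian' {N : ℕ} {A : Matrix (Fin N) (Fin N) ℝ} (h : Aᵀ = A) : A.IsHermitian := by
  rwa [Matrix.IsHermitian, Matrix.conjTranspose_eq_transpose_of_trivial]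

lemma eig_quad_lower {N : ℕ} (A : Matrix (Fin N) (Fin N) ℝ) (hA : Aᵀ = A) (α : ℝ)
    (hbd : ∀ μ : ℝ, Module.End.HasEigenvalue A.mulVecLin μ → α ≤ μ) :
    ∀ x : Fin N → ℝ, α * (x ⬝ᵥ x) ≤ x ⬝ᵥ A *ᵥ x := by
  intro x
  set B : Matrix (Fin N) (Fin N) ℝ := A - α • 1 with hB
  have hBsym : B.IsHermitian := by
    apply symm_isHermitian'
    simp [hB, Matrix.transpose_smul, hA]
  have hev : ∀ i, 0 ≤ hBsym.eigenvalues i := by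
    intro i
    set μ := hBsym.eigenvalues i with hμ
    have hv := hBsym.mulVec_eigenvectorBasis i
    have hvne : ⇑(hBsym.eigenvectorBasis i) ≠ 0 := by
      have := hBsym.eigenvectorBasis.orthonormal.ne_zero i
      intro hcon
      exact this (by ext j; exact congrFun hcon j)
    have hAv : A *ᵥ ⇑(hBsym.eigenvectorBasis i) = (μ + α) • ⇑(hBsym.eigenvectorBasis i) := by
      have hBv : B *ᵥ ⇑(hBsym.eigenvectorBasis i) =
          A *ᵥ ⇑(hBsym.eigenvectorBasis i) - α • ⇑(hBsym.eigenvectorBasis i) := by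
        simp [hB, Matrix.sub_mulVec, Matrix.smul_mulVec]
      rw [hBv] at hv
      have := congrArg (· + α • ⇑(hBsym.eigenvectorBasis i)) hv
      simpa [add_smul, sub_add_cancel, add_comm] using this
    have : Module.End.HasEigenvalue A.mulVecLin (μ + α) := by
      apply Module.End.hasEigenvalue_of_hasEigenvector (x := ⇑(hBsym.eigenvectorBasis i))
      refine ⟨Module.End.mem_eigenspace_iff.2 ?_, hvne⟩
      simpa [Matrix.mulVecLin_apply] using hAv
    have := hbd _ this
    linarith
  have hpsd : B.PosSemidef := hBsym.posSemidef_iff_eigenvalues_nonneg.mpr hev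
  have h0 := hpsd.dotProduct_mulVec_nonneg x
  have hexp : star x ⬝ᵥ B *ᵥ x = x ⬝ᵥ A *ᵥ x - α * (x ⬝ᵥ x) := by
    simp [hB, Matrix.sub_mulVec, Matrix.smul_mulVec, dotProduct_sub,
      dotProduct_smul, star_trivial, smul_eq_mul]
  linarith [hexp ▸ h0]

lemma eig_quad_upper {N : ℕ} (A : Matrix (Fin N) (Fin N) ℝ) (hA : Aᵀ = A) (β : ℝ)
    (hbd : ∀ μ : ℝ, Module.End.HasEigenvalue A.mulVecLin μ → μ ≤ β) :
    ∀ x : Fin N → ℝ, x ⬝ᵥ A *ᵥ x ≤ β * (x ⬝ᵥ x) := by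
  intro x
  have h := eig_quad_lower (-A) (by simp [hA]) (-β) ?_ x
  · have hx : x ⬝ᵥ (-A) *ᵥ x = -(x ⬝ᵥ A *ᵥ x) := by simp [Matrix.neg_mulVec]
    rw [hx] at h; linarith
  · intro μ hμ
    have : Module.End.HasEigenvalue A.mulVecLin (-μ) := by
      obtain ⟨v, hv⟩ := hμ.exists_hasEigenvector
      apply Module.End.hasEigenvalue_of_hasEigenvector (x := v)
      refine ⟨Module.End.mem_eigenspace_iff.2 ?_, hv.2⟩
      have h1 := Module.End.mem_eigenspace_iff.1 hv.1
      simp only [Matrix.mulVecLin_apply, Matrix.neg_mulVec] at h1 ⊢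
      have := congrArg Neg.neg h1
      simpa [neg_smul] using this
    linarith [hbd _ this]

noncomputable def entryCLM {N M : ℕ} (i : Fin N) (j : Fin M) :
    Matrix (Fin N) (Fin M) ℝ →L[ℝ] ℝ :=
  LinearMap.toContinuousLinearMap
    ((LinearMap.proj (R := ℝ) (φ := fun _ : Fin M => ℝ) j).comp
      (LinearMap.proj (R := ℝ) (φ := fun _ : Fin N => Fin M → ℝ) i))

lemma hasDerivAt_entry {N M : ℕ} {A A' : ℝ → Matrix (Fin N) (Fin M) ℝ} {t : ℝ}
    (h : HasDerivAt A (A' t) t) (i : Fin N) (j : Fin M) :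
    HasDerivAt (fun τ => A τ i j) (A' t i j) t :=
  ((entryCLM i j).hasFDerivAt.comp_hasDerivAt t h :)

lemma hasDerivAt_comp_proj {N : ℕ} {x x' : ℝ → EuclideanSpace ℝ (Fin N)} {t : ℝ}
    (h : HasDerivAt x (x' t) t) (i : Fin N) :
    HasDerivAt (fun τ => x τ i) (x' t i) t :=
  ((EuclideanSpace.proj i).hasFDerivAt.comp_hasDerivAt t h :)

lemma hasDerivAt_quad {N : ℕ} (A A' : ℝ → Matrix (Fin N) (Fin N) ℝ)
    (x x' : ℝ → EuclideanSpace ℝ (Fin N)) (t : ℝ)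
    (hA : HasDerivAt A (A' t) t) (hx : HasDerivAt x (x' t) t) :
    HasDerivAt (fun τ => x τ ⬝ᵥ (A τ *ᵥ x τ))
      (x' t ⬝ᵥ (A t *ᵥ x t) + x t ⬝ᵥ (A' t *ᵥ x t) + x t ⬝ᵥ (A t *ᵥ x' t)) t := by
  have key : ∀ i, HasDerivAt (fun τ => x τ i * ((A τ *ᵥ x τ) i))
      (x' t i * (A t *ᵥ x t) i + x t i * (A' t *ᵥ x t) i + x t i * (A t *ᵥ x' t) i) t := by
    intro i
    have hmv : HasDerivAt (fun τ => (A τ *ᵥ x τ) i)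
        ((A' t *ᵥ x t) i + (A t *ᵥ x' t) i) t := by
      have h1 : ∀ j : Fin N, HasDerivAt (fun τ => A τ i j * x τ j)
          (A' t i j * x t j + A t i j * x' t j) t := fun j =>
        (hasDerivAt_entry hA i j).mul (hasDerivAt_comp_proj hx j)
      have hsum := HasDerivAt.fun_sum (u := Finset.univ) (fun j _ => h1 j)
      simpa [Matrix.mulVec, dotProduct, Finset.sum_add_distrib] using hsum
    have := (hasDerivAt_comp_proj hx i).mul hmv
    exact this.congr_deriv (by ring)
  have hsum := HasDerivAt.fun_sum (u := Finset.univ) (fun i _ => key i)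
  have e1 : (fun τ => ∑ i, x τ i * (A τ *ᵥ x τ) i) = fun τ => x τ ⬝ᵥ (A τ *ᵥ x τ) := by
    funext τ; simp [dotProduct]
  rw [e1] at hsum
  refine hsum.congr_deriv ?_
  simp [dotProduct, Finset.sum_add_distrib]

lemma dot_symm {N : ℕ} (A : Matrix (Fin N) (Fin N) ℝ) (hA : Aᵀ = A) (u w : Fin N → ℝ) :
    u ⬝ᵥ A *ᵥ w = w ⬝ᵥ A *ᵥ u := by
  calc u ⬝ᵥ A *ᵥ w = (Aᵀ *ᵥ u) ⬝ᵥ w := by rw [Matrix.dotProduct_mulVec, Matrix.mulVec_transpose]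
    _ = (A *ᵥ u) ⬝ᵥ w := by rw [hA]
    _ = w ⬝ᵥ A *ᵥ u := dotProduct_comm _ _

lemma skew_quad {N : ℕ} (S : Matrix (Fin N) (Fin N) ℝ) (h : Sᵀ = -S) (x : Fin N → ℝ) :
    x ⬝ᵥ S *ᵥ x = 0 := by
  have h1 : x ⬝ᵥ S *ᵥ x = (Sᵀ *ᵥ x) ⬝ᵥ x := by
    rw [Matrix.dotProduct_mulVec, Matrix.mulVec_transpose]
  rw [h, Matrix.neg_mulVec, neg_dotProduct, dotProduct_comm] at h1
  rw [dotProduct_comm]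
  linarith

lemma dot_self_nonneg' {N : ℕ} (u : Fin N → ℝ) : 0 ≤ u ⬝ᵥ u :=
  Finset.sum_nonneg fun i _ => mul_self_nonneg _

lemma norm_sq_eq_dot {N : ℕ} (x : EuclideanSpace ℝ (Fin N)) : ‖x‖ ^ 2 = x ⬝ᵥ x := by
  rw [← real_inner_self_eq_norm_sq]
  rw [real_inner_self_eq_norm_sq, EuclideanSpace.real_norm_sq_eq]
  simp [dotProduct, sq]

lemma dot_le_norm {N : ℕ} (x y : EuclideanSpace ℝ (Fin N)) : x ⬝ᵥ y ≤ ‖x‖ * ‖y‖ := by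
  have := real_inner_le_norm x y
  simpa [PiLp.inner_apply, dotProduct, RCLike.inner_apply, mul_comm] using this

end Helpers

@[reducible] def pify {N : ℕ} (z : EuclideanSpace ℝ (Fin N)) : Fin N → ℝ := z

set_option maxHeartbeats 1000000

/-- Under the hypotheses of the main theorem, the Lyapunov-like function
`V t = s tᵀ (H t) (s t) + ã tᵀ (G t) (ã t)` is differentiable and satisfies
`V' t ≤ -2 λ_con V t + (2 D̄ / √m₁) √(V t)` for all `t ≥ 0`, where
`λ_con = min (k, (λ/2)(m₁ + γ)) / m₂`. -/
theorem stmt_16 (n m : ℕ) (lam gam : ℝ) (hlam : 0 < lam) (hgam : 0 < gam)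
    (H H' : ℝ → Matrix (Fin n) (Fin n) ℝ) (G G' : ℝ → Matrix (Fin m) (Fin m) ℝ)
    (hHd : ∀ t : ℝ, 0 ≤ t → HasDerivAt H (H' t) t)
    (hGd : ∀ t : ℝ, 0 ≤ t → HasDerivAt G (G' t) t)
    (hHsym : ∀ t : ℝ, 0 ≤ t → (H t)ᵀ = H t) (hGsym : ∀ t : ℝ, 0 ≤ t → (G t)ᵀ = G t)
    (hHpd : ∀ t : ℝ, 0 ≤ t → (H t).PosDef) (hGpd : ∀ t : ℝ, 0 ≤ t → (G t).PosDef)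
    (C : ℝ → Matrix (Fin n) (Fin n) ℝ) (hC : Continuous C)
    (φ W : ℝ → Matrix (Fin n) (Fin m) ℝ) (hφ : Continuous φ) (hWc : Continuous W)
    (K : Matrix (Fin n) (Fin n) ℝ) (hKsym : Kᵀ = K) (hKpd : K.PosDef)
    (k : ℝ) (hk : 0 < k)
    (hkmin : IsLeast {μ : ℝ | Module.End.HasEigenvalue K.mulVecLin μ} k)
    (s s' : ℝ → EuclideanSpace ℝ (Fin n)) (atil atil' : ℝ → EuclideanSpace ℝ (Fin m))
    (hs : ∀ t : ℝ, 0 ≤ t → HasDerivAt s (s' t) t)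
    (hatil : ∀ t : ℝ, 0 ≤ t → HasDerivAt atil (atil' t) t)
    (d d₁ : ℝ → EuclideanSpace ℝ (Fin n)) (a : EuclideanSpace ℝ (Fin m))
    (hdyn1 : ∀ t : ℝ, 0 ≤ t →
      mv (H t) (s' t) + mv (C t + K) (s t) - mv (φ t) (atil t) = d t)
    (hdyn2 : ∀ t : ℝ, 0 ≤ t →
      mv (G t) (atil' t) + mv ((φ t)ᵀ) (s t)
          + mv ((W t)ᵀ * W t + (lam * gam) • (1 : Matrix (Fin m) (Fin m) ℝ)) (atil t)
        = -(mv ((W t)ᵀ) (d₁ t) + (lam * gam) • a))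
    (hskew : ∀ t : ℝ, 0 ≤ t → (H' t - (2:ℝ) • C t)ᵀ = -(H' t - (2:ℝ) • C t))
    (hG' : ∀ t : ℝ, 0 ≤ t →
      G' t = (W t)ᵀ * W t - lam • G t + (lam * gam) • (1 : Matrix (Fin m) (Fin m) ℝ))
    (m₁ m₂ : ℝ) (hm₁ : 0 < m₁) (hm₁₂ : m₁ ≤ m₂)
    (hHeig : ∀ t : ℝ, 0 ≤ t → ∀ μ : ℝ,
      Module.End.HasEigenvalue (H t).mulVecLin μ → μ ∈ Set.Icc m₁ m₂)
    (hGeig : ∀ t : ℝ, 0 ≤ t → ∀ μ : ℝ,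
      Module.End.HasEigenvalue (G t).mulVecLin μ → μ ∈ Set.Icc m₁ m₂)
    (Dbar : ℝ)
    (hDbar : ∀ t : ℝ, 0 ≤ t →
      Real.sqrt (‖d t‖ ^ 2 + ‖mv ((W t)ᵀ) (d₁ t) + (lam * gam) • a‖ ^ 2) ≤ Dbar)
    (lcon : ℝ) (hlcon : lcon = min k (lam / 2 * (m₁ + gam)) / m₂)
    (V : ℝ → ℝ)
    (hV : ∀ t : ℝ, V t = s t ⬝ᵥ (H t *ᵥ s t) + atil t ⬝ᵥ (G t *ᵥ atil t)) :
    ∀ t : ℝ, 0 ≤ t → ∃ v : ℝ, HasDerivAt V v t ∧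
      v ≤ -2 * lcon * V t + 2 * Dbar / Real.sqrt m₁ * Real.sqrt (V t) := by
  intro t ht
  classical
  have hq1 := hasDerivAt_quad H H' s s' t (hHd t ht) (hs t ht)
  have hq2 := hasDerivAt_quad G G' atil atil' t (hGd t ht) (hatil t ht)
  have hVfun : V = fun τ => s τ ⬝ᵥ (H τ *ᵥ s τ) + atil τ ⬝ᵥ (G τ *ᵥ atil τ) := funext hV
  refine ⟨_, by rw [hVfun]; exact hq1.add hq2, ?_⟩
  -- abbreviations
  set E : EuclideanSpace ℝ (Fin m) := mv ((W t)ᵀ) (d₁ t) + (lam * gam) • a with hE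
  -- dynamics at pi level
  have h1p : (H t *ᵥ s' t : Fin n → ℝ)
      = pify (d t) - C t *ᵥ s t - K *ᵥ s t + φ t *ᵥ atil t := by
    have h := hdyn1 t ht
    simp only [mv, Matrix.add_mulVec] at h
    have h' : (H t *ᵥ s' t : Fin n → ℝ) + (C t *ᵥ s t + K *ᵥ s t) - φ t *ᵥ atil t
        = pify (d t) := congrArg WithLp.ofLp h
    rw [← h']; abel
  have h2p : (G t *ᵥ atil' t : Fin m → ℝ)
      = -pify E - (φ t)ᵀ *ᵥ s t - (W t)ᵀ *ᵥ (W t *ᵥ atil t)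
        - (lam * gam) • pify (atil t) := by
    have h := hdyn2 t ht
    simp only [mv, Matrix.add_mulVec, Matrix.smul_mulVec, Matrix.one_mulVec,
      ← Matrix.mulVec_mulVec] at h
    have h' : (G t *ᵥ atil' t : Fin m → ℝ) + (φ t)ᵀ *ᵥ s t
        + ((W t)ᵀ *ᵥ (W t *ᵥ atil t) + (lam * gam) • pify (atil t))
        = -pify E := congrArg WithLp.ofLp h
    rw [← h']; abel
  -- scalar consequences
  have hd1 : s t ⬝ᵥ (H t *ᵥ s' t)
      = s t ⬝ᵥ pify (d t) - s t ⬝ᵥ (C t *ᵥ s t) - s t ⬝ᵥ (K *ᵥ s t)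
        + s t ⬝ᵥ (φ t *ᵥ atil t) := by
    rw [h1p, dotProduct_add, dotProduct_sub, dotProduct_sub]
  have hWW : atil t ⬝ᵥ ((W t)ᵀ *ᵥ (W t *ᵥ atil t)) = (W t *ᵥ atil t) ⬝ᵥ (W t *ᵥ atil t) := by
    rw [Matrix.dotProduct_mulVec, Matrix.vecMul_transpose]
  have hd2 : atil t ⬝ᵥ (G t *ᵥ atil' t)
      = -(atil t ⬝ᵥ pify E) - atil t ⬝ᵥ ((φ t)ᵀ *ᵥ s t)
        - (W t *ᵥ atil t) ⬝ᵥ (W t *ᵥ atil t) - lam * gam * (atil t ⬝ᵥ atil t) := by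
    rw [h2p, dotProduct_sub, dotProduct_sub, dotProduct_sub,
      dotProduct_neg, dotProduct_smul, hWW, smul_eq_mul]
  have hskewq : s t ⬝ᵥ (H' t *ᵥ s t) = 2 * (s t ⬝ᵥ (C t *ᵥ s t)) := by
    have h0 := skew_quad _ (hskew t ht) (s t)
    rw [Matrix.sub_mulVec, Matrix.smul_mulVec, dotProduct_sub,
      dotProduct_smul, smul_eq_mul] at h0
    linarith
  have hGq : atil t ⬝ᵥ (G' t *ᵥ atil t)
      = (W t *ᵥ atil t) ⬝ᵥ (W t *ᵥ atil t) - lam * (atil t ⬝ᵥ (G t *ᵥ atil t))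
        + lam * gam * (atil t ⬝ᵥ atil t) := by
    rw [hG' t ht, Matrix.add_mulVec, Matrix.sub_mulVec, Matrix.smul_mulVec,
      Matrix.smul_mulVec, Matrix.one_mulVec, ← Matrix.mulVec_mulVec,
      dotProduct_add, dotProduct_sub, dotProduct_smul,
      dotProduct_smul, smul_eq_mul, smul_eq_mul, hWW]
  have hcross : s t ⬝ᵥ (φ t *ᵥ atil t) = atil t ⬝ᵥ ((φ t)ᵀ *ᵥ s t) := by
    rw [Matrix.dotProduct_mulVec, ← Matrix.mulVec_transpose, dotProduct_comm]
  have hsymH := dot_symm (H t) (hHsym t ht) (s' t) (s t)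
  have hsymG := dot_symm (G t) (hGsym t ht) (atil' t) (atil t)
  -- value of the derivative
  have hveq : (s' t ⬝ᵥ (H t *ᵥ s t) + s t ⬝ᵥ (H' t *ᵥ s t) + s t ⬝ᵥ (H t *ᵥ s' t))
      + (atil' t ⬝ᵥ (G t *ᵥ atil t) + atil t ⬝ᵥ (G' t *ᵥ atil t) + atil t ⬝ᵥ (G t *ᵥ atil' t))
      = 2 * (s t ⬝ᵥ pify (d t)) - 2 * (atil t ⬝ᵥ pify E)
        - 2 * (s t ⬝ᵥ (K *ᵥ s t)) - (W t *ᵥ atil t) ⬝ᵥ (W t *ᵥ atil t)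
        - lam * gam * (atil t ⬝ᵥ atil t) - lam * (atil t ⬝ᵥ (G t *ᵥ atil t)) := by
    rw [hsymH, hsymG, hd1, hd2, hskewq, hGq, hcross]; ring
  rw [hveq]
  -- quadratic-form bounds
  have hm₂ : (0:ℝ) < m₂ := lt_of_lt_of_le hm₁ hm₁₂
  set c := min k (lam / 2 * (m₁ + gam)) with hc
  have hc0 : 0 < c := lt_min hk (by positivity)
  have hxx : (0:ℝ) ≤ s t ⬝ᵥ s t := dot_self_nonneg' _
  have hyy : (0:ℝ) ≤ atil t ⬝ᵥ atil t := dot_self_nonneg' _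
  have hKq := eig_quad_lower K hKsym k (fun μ h => hkmin.2 h) (s t)
  have hHup := eig_quad_upper (H t) (hHsym t ht) m₂ (fun μ h => (hHeig t ht μ h).2) (s t)
  have hGlow := eig_quad_lower (G t) (hGsym t ht) m₁ (fun μ h => (hGeig t ht μ h).1) (atil t)
  have hHlow := eig_quad_lower (H t) (hHsym t ht) m₁ (fun μ h => (hHeig t ht μ h).1) (s t)
  have hGup := eig_quad_upper (G t) (hGsym t ht) m₂ (fun μ h => (hGeig t ht μ h).2) (atil t)
  have hWq : (0:ℝ) ≤ (W t *ᵥ atil t) ⬝ᵥ (W t *ᵥ atil t) := dot_self_nonneg' _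
  set X := s t ⬝ᵥ s t + atil t ⬝ᵥ atil t with hX
  have hX0 : (0:ℝ) ≤ X := by rw [hX]; exact add_nonneg hxx hyy
  have hXe1 : m₂ * X = m₂ * (s t ⬝ᵥ s t) + m₂ * (atil t ⬝ᵥ atil t) := by rw [hX]; ring
  have hXe2 : m₁ * X = m₁ * (s t ⬝ᵥ s t) + m₁ * (atil t ⬝ᵥ atil t) := by rw [hX]; ring
  have hVle : V t ≤ m₂ * X := by rw [hV t, hXe1]; linarith
  have hVge : m₁ * X ≤ V t := by rw [hV t, hXe2]; linarith
  have hV0 : (0:ℝ) ≤ V t := le_trans (mul_nonneg hm₁.le hX0) hVge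
  -- norms and Cauchy–Schwarz
  have hnx : ‖s t‖ ^ 2 = s t ⬝ᵥ s t := norm_sq_eq_dot _
  have hny : ‖atil t‖ ^ 2 = atil t ⬝ᵥ atil t := norm_sq_eq_dot _
  have hcs1 : s t ⬝ᵥ pify (d t) ≤ ‖s t‖ * ‖d t‖ := dot_le_norm _ _
  have hcs2 : -(atil t ⬝ᵥ pify E) ≤ ‖atil t‖ * ‖E‖ := by
    have h := dot_le_norm (atil t) (-E)
    have hne : atil t ⬝ᵥ pify (-E) = -(atil t ⬝ᵥ pify E) := by
      rw [show pify (-E) = -pify E from rfl, dotProduct_neg]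
    rw [show (atil t ⬝ᵥ (-E : EuclideanSpace ℝ (Fin m)) : ℝ) = atil t ⬝ᵥ pify (-E) from rfl,
      hne, norm_neg] at h
    exact h
  have hDq : Real.sqrt (‖d t‖ ^ 2 + ‖E‖ ^ 2) ≤ Dbar := by
    have h := hDbar t ht; rwa [← hE] at h
  have hD0 : (0:ℝ) ≤ Dbar := le_trans (Real.sqrt_nonneg _) hDq
  -- key1 : inner products vs sqrt X * Dbar
  have key1 : s t ⬝ᵥ pify (d t) - atil t ⬝ᵥ pify E ≤ Real.sqrt X * Dbar := by
    have h2 : (‖s t‖ * ‖d t‖ + ‖atil t‖ * ‖E‖) ^ 2 ≤ X * (‖d t‖ ^ 2 + ‖E‖ ^ 2) := by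
      rw [hX, ← hnx, ← hny]
      nlinarith [sq_nonneg (‖s t‖ * ‖E‖ - ‖atil t‖ * ‖d t‖), norm_nonneg (s t),
        norm_nonneg (atil t), norm_nonneg (d t), norm_nonneg E]
    have h3 : ‖s t‖ * ‖d t‖ + ‖atil t‖ * ‖E‖
        ≤ Real.sqrt (X * (‖d t‖ ^ 2 + ‖E‖ ^ 2)) := by
      have h4 := Real.sqrt_le_sqrt h2
      rwa [Real.sqrt_sq (by positivity)] at h4
    have h5 : Real.sqrt (X * (‖d t‖ ^ 2 + ‖E‖ ^ 2))
        = Real.sqrt X * Real.sqrt (‖d t‖ ^ 2 + ‖E‖ ^ 2) := Real.sqrt_mul hX0 _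
    have h6 : Real.sqrt X * Real.sqrt (‖d t‖ ^ 2 + ‖E‖ ^ 2) ≤ Real.sqrt X * Dbar :=
      mul_le_mul_of_nonneg_left hDq (Real.sqrt_nonneg _)
    linarith
  -- key2 : sqrt X vs sqrt V
  have key2 : Real.sqrt X ≤ Real.sqrt (V t) / Real.sqrt m₁ := by
    rw [le_div_iff₀ (Real.sqrt_pos.2 hm₁), ← Real.sqrt_mul hX0]
    apply Real.sqrt_le_sqrt
    nlinarith
  -- assemble
  have hck : c * (s t ⬝ᵥ s t) ≤ k * (s t ⬝ᵥ s t) :=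
    mul_le_mul_of_nonneg_right (min_le_left _ _) hxx
  have hcg : c * (atil t ⬝ᵥ atil t) ≤ lam / 2 * (m₁ + gam) * (atil t ⬝ᵥ atil t) :=
    mul_le_mul_of_nonneg_right (min_le_right _ _) hyy
  have hlG : lam * (m₁ * (atil t ⬝ᵥ atil t)) ≤ lam * (atil t ⬝ᵥ (G t *ᵥ atil t)) :=
    mul_le_mul_of_nonneg_left hGlow hlam.le
  have hring : lam * gam * (atil t ⬝ᵥ atil t) + lam * (m₁ * (atil t ⬝ᵥ atil t))
      = 2 * (lam / 2 * (m₁ + gam)) * (atil t ⬝ᵥ atil t) := by ring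
  have hXc : 2 * c * X = 2 * (c * (s t ⬝ᵥ s t)) + 2 * (c * (atil t ⬝ᵥ atil t)) := by
    rw [hX]; ring
  have hstep1 : 2 * (s t ⬝ᵥ pify (d t)) - 2 * (atil t ⬝ᵥ pify E)
      - 2 * (s t ⬝ᵥ (K *ᵥ s t)) - (W t *ᵥ atil t) ⬝ᵥ (W t *ᵥ atil t)
      - lam * gam * (atil t ⬝ᵥ atil t) - lam * (atil t ⬝ᵥ (G t *ᵥ atil t))
      ≤ 2 * (Real.sqrt X * Dbar) - 2 * c * X := by
    rw [hXc]; linarith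
  have h8 : lcon * V t = c * V t / m₂ := by rw [hlcon]; ring
  have h7 : c * V t ≤ c * (m₂ * X) := mul_le_mul_of_nonneg_left hVle hc0.le
  have h11 : c * V t / m₂ ≤ c * X := by
    rw [div_le_iff₀ hm₂]
    have : c * (m₂ * X) = c * X * m₂ := by ring
    linarith
  have hstep2 : -(2 * c * X) ≤ -(2 * lcon * V t) := by
    have : 2 * lcon * V t = 2 * (c * V t / m₂) := by rw [mul_assoc, h8]
    linarith
  have h9 : Real.sqrt X * Dbar ≤ Real.sqrt (V t) / Real.sqrt m₁ * Dbar :=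
    mul_le_mul_of_nonneg_right key2 hD0
  have h10 : 2 * (Real.sqrt (V t) / Real.sqrt m₁ * Dbar)
      = 2 * Dbar / Real.sqrt m₁ * Real.sqrt (V t) := by ring
  linarith
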